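/- arXiv:cs/0406044 — 2 statements merged into one kernel-verified Lean document; each statement's English description precedes it below -/
import Mathlib

section
/- For every s-chromatic graph G, F_χ(G) ≤ log₂(N(G)) + log₂(s!), where N(G) is the number of partitions of V(G) into s independent sets (equivalently, the number of proper s-colorings of G up to permutation of colors). -/
open SimpleGraph

def properCol {V : Type*} (G : SimpleGraph V) (s : ℕ) (c : V → Fin s) : Prop :=
  ∀ ⦃u v⦄, G.Adj u v → c u ≠ c v

noncomputable def chrom {V : Type*} [Fintype V] (G : SimpleGraph V) : ℕ :=
  sInf {s | ∃ c : V → Fin s, properCol G s c}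

def IsForcingSet {V : Type*} [Fintype V] (G : SimpleGraph V) (D : Finset V) : Prop :=
  ∃ p : V → Fin (chrom G), ∃! c : V → Fin (chrom G),
    properCol G (chrom G) c ∧ ∀ v ∈ D, c v = p v

noncomputable def Fchi {V : Type*} [Fintype V] (G : SimpleGraph V) : ℕ :=
  sInf {k | ∃ D : Finset V, D.card = k ∧ IsForcingSet G D}

noncomputable def Npart {V : Type*} (G : SimpleGraph V) (s : ℕ) : ℕ :=
  Nat.card {r : V → V → Prop // ∃ c : V → Fin s,
    properCol G s c ∧ r = fun u v => c u = c v}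

def tensorProd {V W : Type*} (G : SimpleGraph V) (H : SimpleGraph W) :
    SimpleGraph (V × W) where
  Adj x y := G.Adj x.1 y.1 ∧ H.Adj x.2 y.2
  symm := ⟨fun _ _ h => ⟨h.1.symm, h.2.symm⟩⟩
  loopless := ⟨fun x h => G.loopless.irrefl x.1 h.1⟩

/-!
Distinct proper `s`-colourings that induce the same partition of `V(G)` differ by an injective
relabelling of the colours used, so there are at most `N(G) · s!` proper `s`-colourings. Inside any
nonempty finite family of colourings one can isolate a single member by prescribing its values on
a set `D` with `2 ^ |D|` at most the size of the family: while two members remain, fix the value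
at a vertex where they differ so as to keep the smaller half. Applied to all proper
`χ(G)`-colourings, `D` is a forcing set and `2 ^ |D| ≤ N(G) · s!`.
-/

open Finset
open scoped Nat

lemma Finset.exists_two_mul_card_fiber_le {ι β : Type*} [DecidableEq β] (S : Finset ι)
    (f : ι → β) {x y : ι} (hx : x ∈ S) (hy : y ∈ S) (hxy : f x ≠ f y) :
    ∃ z ∈ S, ∃ w ∈ S, f w ≠ f z ∧ 2 * #{i ∈ S | f i = f z} ≤ #S := by
  have hsum : #{i ∈ S | f i = f x} + #{i ∈ S | f i = f y} ≤ #S := by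
    have hy_sub : #{i ∈ S | f i = f y} ≤ #{i ∈ S | ¬f i = f x} :=
      card_le_card fun i hi => by
        rw [mem_filter] at hi ⊢
        exact ⟨hi.1, hi.2.trans_ne hxy.symm⟩
    have := S.card_filter_add_card_filter_not (fun i => f i = f x)
    omega
  rcases le_total #{i ∈ S | f i = f x} #{i ∈ S | f i = f y} with h | h
  · exact ⟨x, hx, y, hy, hxy.symm, by omega⟩
  · exact ⟨y, hy, x, hx, hxy, by omega⟩

lemma Finset.exists_determining_finset {α β : Type*} [DecidableEq β] (S : Finset (α → β))
    (hS : S.Nonempty) :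
    ∃ D : Finset α, ∃ c ∈ S, (∀ c' ∈ S, (∀ v ∈ D, c' v = c v) → c' = c) ∧ 2 ^ #D ≤ #S := by
  classical
  induction S using Finset.strongInduction with
  | _ S ih =>
  by_cases hsingle : ∀ c₁ ∈ S, ∀ c₂ ∈ S, c₁ = c₂
  · obtain ⟨c, hc⟩ := hS
    exact ⟨∅, c, hc, fun c' hc' _ => hsingle c' hc' c hc, by simpa using card_pos.2 ⟨c, hc⟩⟩
  push Not at hsingle
  obtain ⟨c₁, hc₁, c₂, hc₂, hne⟩ := hsingle
  obtain ⟨v, hv⟩ := Function.ne_iff.1 hne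
  obtain ⟨z, hz, w, hw, hwz, hhalf⟩ :=
    S.exists_two_mul_card_fiber_le (fun c => c v) hc₁ hc₂ hv
  set T := {c ∈ S | c v = z v}
  have hTS : T ⊂ S := filter_ssubset.2 ⟨w, hw, hwz⟩
  obtain ⟨D, c, hcT, huniq, hcard⟩ := ih T hTS ⟨z, mem_filter.2 ⟨hz, rfl⟩⟩
  have hcv : c v = z v := (mem_filter.1 hcT).2
  refine ⟨insert v D, c, hTS.subset hcT, fun c' hc' hagree => ?_, ?_⟩
  · have hc'T : c' ∈ T :=
      mem_filter.2 ⟨hc', (hagree v (mem_insert_self v D)).trans hcv⟩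
    exact huniq c' hc'T fun u hu => hagree u (mem_insert_of_mem hu)
  · calc 2 ^ #(insert v D) ≤ 2 ^ (#D + 1) := Nat.pow_le_pow_right two_pos (card_insert_le v D)
      _ = 2 * 2 ^ #D := by ring
      _ ≤ #S := by omega

lemma card_le_factorial_of_forall_eq_iff {α γ : Type*} [Fintype γ] (f : α → γ)
    (T : Finset (α → γ)) (hT : ∀ g ∈ T, ∀ u v, g u = g v ↔ f u = f v) :
    #T ≤ (Fintype.card γ)! := by
  classical
  have hmem : ∀ g ∈ T, ∀ v, g v = g (Set.rangeSplitting f ⟨f v, v, rfl⟩) := fun g hg v =>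
    (hT g hg _ _).2 (Set.apply_rangeSplitting f ⟨f v, v, rfl⟩).symm
  let relabel : T → (Set.range f ↪ γ) := fun g =>
    ⟨fun i => g.1 (Set.rangeSplitting f i), fun i j hij => Subtype.ext <| by
      rw [← Set.apply_rangeSplitting f i, ← Set.apply_rangeSplitting f j]
      exact (hT g.1 g.2 _ _).1 hij⟩
  have hrelabel : Function.Injective relabel := fun g₁ g₂ h => Subtype.ext <| funext fun v => by
    rw [hmem g₁ g₁.2 v, hmem g₂ g₂.2 v]
    exact DFunLike.congr_fun h ⟨f v, v, rfl⟩
  calc #T = Fintype.card T := (Fintype.card_coe T).symm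
    _ ≤ Fintype.card (Set.range f ↪ γ) := Fintype.card_le_of_injective relabel hrelabel
    _ = (Fintype.card γ).descFactorial (Fintype.card (Set.range f)) := Fintype.card_embedding_eq
    _ ≤ (Fintype.card γ)! := Nat.le_of_dvd (Nat.factorial_pos _) <| Dvd.intro_left _ <|
      Nat.factorial_mul_descFactorial (Fintype.card_le_of_injective _ Subtype.val_injective)

lemma card_le_Npart_mul_factorial {V : Type*} [Finite V] (G : SimpleGraph V) (s : ℕ)
    (S : Finset (V → Fin s)) (hS : ∀ c ∈ S, properCol G s c) :
    #S ≤ Npart G s * s ! := by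
  classical
  let partitionOf : (V → Fin s) → V → V → Prop := fun c u v => c u = c v
  have hfiber : ∀ r ∈ S.image partitionOf, #{c ∈ S | partitionOf c = r} ≤ s ! := by
    intro r hr
    obtain ⟨c₀, -, rfl⟩ := mem_image.1 hr
    simpa using card_le_factorial_of_forall_eq_iff c₀ _ fun c hc u v =>
      iff_of_eq (congrFun₂ (mem_filter.1 hc).2 u v)
  have himage : #(S.image partitionOf) ≤ Npart G s := by
    rw [← Nat.card_eq_finsetCard]
    refine Nat.card_le_card_of_injective (fun r => ⟨r.1, ?_⟩) fun r₁ r₂ h => ?_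
    · obtain ⟨c, hc, hcr⟩ := mem_image.1 r.2
      exact ⟨c, hS c hc, hcr.symm⟩
    · exact Subtype.ext (congrArg Subtype.val h :)
  calc #S ≤ s ! * #(S.image partitionOf) := card_le_mul_card_image S _ hfiber
    _ ≤ Npart G s * s ! := by rw [mul_comm]; gcongr

lemma exists_properCol_chrom {V : Type*} [Fintype V] (G : SimpleGraph V) :
    ∃ c : V → Fin (chrom G), properCol G (chrom G) c :=
  Nat.sInf_mem (s := {s | ∃ c : V → Fin s, properCol G s c})
    ⟨Fintype.card V, Fintype.equivFin V, fun _ _ huv h =>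
      G.ne_of_adj huv ((Fintype.equivFin V).injective h)⟩

lemma exists_isForcingSet_two_pow_card_le {V : Type*} [Fintype V] (G : SimpleGraph V) :
    ∃ D : Finset V, IsForcingSet G D ∧ 2 ^ #D ≤ Npart G (chrom G) * (chrom G)! := by
  classical
  let S : Finset (V → Fin (chrom G)) := {c | properCol G (chrom G) c}
  obtain ⟨c₀, hc₀⟩ := exists_properCol_chrom G
  obtain ⟨D, c, hc, huniq, hpow⟩ := S.exists_determining_finset ⟨c₀, by simpa [S] using hc₀⟩
  refine ⟨D, ⟨c, c, ⟨by simpa [S] using hc, fun _ _ => rfl⟩, ?_⟩, ?_⟩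
  · rintro c' ⟨hc', hagree⟩
    exact huniq c' (by simpa [S] using hc') hagree
  · exact hpow.trans (card_le_Npart_mul_factorial G _ S fun c hc => by simpa [S] using hc)

lemma natCast_le_logb_add_logb_of_two_pow_le {k a b : ℕ} (h : 2 ^ k ≤ a * b) :
    (k : ℝ) ≤ Real.logb 2 a + Real.logb 2 b := by
  have hab : 0 < a * b := (Nat.two_pow_pos k).trans_le h
  rw [← Real.logb_mul (by exact_mod_cast (Nat.pos_of_mul_pos_right hab).ne')
    (by exact_mod_cast (Nat.pos_of_mul_pos_left hab).ne'),
    Real.le_logb_iff_rpow_le one_lt_two (by exact_mod_cast hab), Real.rpow_natCast]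
  exact_mod_cast h

theorem stmt3 {V : Type*} [Fintype V] (G : SimpleGraph V) (s : ℕ)
    (hs : chrom G = s) :
    (Fchi G : ℝ) ≤ Real.logb 2 (Npart G s) + Real.logb 2 (Nat.factorial s) := by
  subst hs
  obtain ⟨D, hD, hpow⟩ := exists_isForcingSet_two_pow_card_le G
  have hFchi : Fchi G ≤ #D := Nat.sInf_le ⟨D, rfl, hD⟩
  calc (Fchi G : ℝ) ≤ #D := by exact_mod_cast hFchi
    _ ≤ _ := natCast_le_logb_add_logb_of_two_pow_le hpow
end

section
/- For every k ≥ 1 there exists a 3-chromatic graph G_k on 4k+2 vertices with F_χ(G_k) = 2 whose number of proper 3-colorings, counted up to permutation of colors, equals 2^{k−1} + 1. -/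
/-!
A proper 3-coloring of the prism `K₃ □ K₂` is determined by the colors of `u` and `v` when these
differ, and has exactly two completions when they agree. Gluing `k` prisms at `u, v`, the pair
`{u, v}` is therefore forcing, while no set of size `< χ - 1` can be (swap two colors it does not
see). Up to renaming colors, all colorings with `u, v` colored differently give one partition, and
those with `u, v` colored alike are given by `k` independent binary choices modulo the global swap
of the two remaining colors: `2 ^ (k - 1)` partitions.
-/

open SimpleGraph

open Function

section Coloring

variable {V W : Type*} {G : SimpleGraph V} {s t : ℕ}

def sameColor (c : V → Fin s) : V → V → Prop := fun u v => c u = c v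

theorem sameColor_comp {c : V → Fin s} {π : Fin s → Fin t} (hπ : Injective π) :
    sameColor (π ∘ c) = sameColor c := by
  funext u v
  exact propext hπ.eq_iff

instance [Fintype V] [DecidableRel G.Adj] : DecidablePred (properCol G s) :=
  fun c => inferInstanceAs (Decidable (∀ u v, G.Adj u v → c u ≠ c v))

theorem properCol.comp_injective {c : V → Fin s} (hc : properCol G s c) {π : Fin s → Fin t}
    (hπ : Injective π) : properCol G t (π ∘ c) :=
  fun _ _ huv h => hc huv (hπ h)

theorem properCol_iSup_iff {ι : Type*} {G : ι → SimpleGraph V} {c : V → Fin s} :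
    properCol (⨆ i, G i) s c ↔ ∀ i, properCol (G i) s c :=
  ⟨fun h i _ _ huv => h (iSup_adj.2 ⟨i, huv⟩),
    fun h _ _ huv => let ⟨i, hi⟩ := iSup_adj.1 huv; h i hi⟩

theorem properCol_map_iff (f : V ↪ W) {c : W → Fin s} :
    properCol (G.map f) s c ↔ properCol G s (c ∘ f) := by
  refine ⟨fun h _ _ huv => h (map_adj_apply.2 huv), fun h _ _ huv => ?_⟩
  obtain ⟨u, v, hG, rfl, rfl⟩ := (map_adj f G _ _).1 huv
  exact h hG

theorem Npart_map_equiv (e : V ≃ W) : Npart (G.map e.toEmbedding) s = Npart G s := by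
  refine Nat.card_congr (Equiv.subtypeEquiv (e.symm.arrowCongr (e.symm.arrowCongr (.refl Prop)))
    fun r => ⟨?_, ?_⟩)
  · rintro ⟨c, hc, rfl⟩
    exact ⟨c ∘ e, (properCol_map_iff e.toEmbedding).1 hc, rfl⟩
  · rintro ⟨c, hc, hr⟩
    refine ⟨c ∘ e.symm, (properCol_map_iff e.toEmbedding).2 (by simpa [comp_assoc]), ?_⟩
    funext a b
    simpa using congrFun₂ hr (e.symm a) (e.symm b)

variable [Fintype V]

theorem chrom_le {c : V → Fin s} (hc : properCol G s c) : chrom G ≤ s :=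
  Nat.sInf_le ⟨c, hc⟩

theorem le_chrom_of_pairwise_adj (f : Fin s → V) (hf : Pairwise fun i j => G.Adj (f i) (f j)) :
    s ≤ chrom G := by
  refine le_csInf
    ⟨_, Fintype.equivFin V, fun _ _ huv => (Fintype.equivFin V).injective.ne huv.ne⟩ ?_
  rintro t ⟨c, hc⟩
  simpa using Fintype.card_le_of_injective (c ∘ f) fun i j hij =>
    by_contra fun hne => hc (hf hne) hij

theorem chrom_lt_of_not_surjective {c : V → Fin s} (hc : properCol G s c) (hs : ¬Surjective c) :
    chrom G < s := by
  obtain ⟨a, ha⟩ := not_forall.1 hs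
  cases s with
  | zero => exact a.elim0
  | succ n =>
    have : ∀ v, ∃ z, a.succAbove z = c v := fun v => Fin.exists_succAbove_eq fun h => ha ⟨v, h⟩
    choose c' hc' using this
    have hc'' : properCol G n c' := fun u v huv h => hc huv (by rw [← hc' u, ← hc' v, h])
    exact Nat.lt_succ_of_le (chrom_le hc'')

theorem properCol.surjective {c : V → Fin (chrom G)} (hc : properCol G (chrom G) c) :
    Surjective c :=
  by_contra fun h => (chrom_lt_of_not_surjective hc h).false

/-- Swapping two colors that a forcing set does not see gives a second extension. -/
theorem chrom_sub_one_le_card_of_isForcingSet {D : Finset V} (hD : IsForcingSet G D) :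
    chrom G - 1 ≤ D.card := by
  classical
  obtain ⟨p, c, ⟨hc, hcD⟩, huniq⟩ := hD
  by_contra! hlt
  have hfree : 1 < (Finset.univ \ D.image c).card := by
    rw [Finset.card_sdiff_of_subset (Finset.subset_univ _), Finset.card_univ, Fintype.card_fin]
    have := D.card_image_le (f := c)
    omega
  obtain ⟨a, ha, b, hb, hab⟩ := Finset.one_lt_card.1 hfree
  have hswap : Equiv.swap a b ∘ c = c := by
    refine huniq _ ⟨hc.comp_injective (Equiv.injective _), fun v hv => ?_⟩
    have hv' : c v ∈ D.image c := Finset.mem_image_of_mem c hv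
    rw [comp_apply, Equiv.swap_apply_of_ne_of_ne (ne_of_mem_of_not_mem hv' (Finset.mem_sdiff.1 ha).2)
      (ne_of_mem_of_not_mem hv' (Finset.mem_sdiff.1 hb).2), hcD v hv]
  obtain ⟨w, hw⟩ := hc.surjective a
  have := congrFun hswap w
  simp only [comp_apply, hw, Equiv.swap_apply_left] at this
  exact hab this.symm

theorem Fchi_eq_of_isForcingSet {D : Finset V} (hD : IsForcingSet G D)
    (hcard : D.card = chrom G - 1) : Fchi G = chrom G - 1 :=
  le_antisymm (hcard ▸ Nat.sInf_le ⟨D, rfl, hD⟩)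
    (le_csInf ⟨_, D, rfl, hD⟩ fun _ ⟨_, hn, hD'⟩ => hn ▸ chrom_sub_one_le_card_of_isForcingSet hD')

end Coloring

theorem Equiv.Perm.exists_apply_eq_and_apply_eq {α : Type*} [DecidableEq α] {a b a' b' : α}
    (hab : a ≠ b) (hab' : a' ≠ b') : ∃ π : Equiv.Perm α, π a = a' ∧ π b = b' := by
  refine ⟨(Equiv.swap a a').trans (Equiv.swap (Equiv.swap a a' b) b'), ?_, ?_⟩
  · have : Equiv.swap a a' b ≠ Equiv.swap a a' a := (Equiv.injective _).ne hab.symm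
    rw [Equiv.swap_apply_left] at this
    simp [Equiv.swap_apply_of_ne_of_ne this.symm hab']
  · simp

instance {α β : Type*} [DecidableEq α] [DecidableEq β] (G : SimpleGraph α) (H : SimpleGraph β)
    [DecidableRel G.Adj] [DecidableRel H.Adj] : DecidableRel (G □ H).Adj :=
  fun _ _ => decidable_of_iff' _ boxProd_adj

/-- Identifies `Bool ⊕ Fin 4` with the vertices of `K₃ □ K₂`; the hubs `inl false ↦ (0, 0)` and
`inl true ↦ (1, 1)` are the forcing pair `u, v`. -/
def prismLabel : Bool ⊕ Fin 4 → Fin 3 × Fin 2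
  | .inl false => (0, 0)
  | .inl true => (1, 1)
  | .inr r => ![(1, 0), (2, 0), (0, 1), (2, 1)] r

def prism : SimpleGraph (Bool ⊕ Fin 4) :=
  ((⊤ : SimpleGraph (Fin 3)) □ (⊤ : SimpleGraph (Fin 2))).comap prismLabel

instance : DecidableRel prism.Adj := inferInstanceAs (DecidableRel (SimpleGraph.comap _ _).Adj)

/-- With hub colors `x ≠ y` the coloring is forced (the third color is `-(x + y)`); with `x = y`
the triangle through `u` takes `x + 1, x + 2` in one of two orders, chosen by `ε`. -/
def prismColoring (x y : Fin 3) (ε : Bool) : Bool ⊕ Fin 4 → Fin 3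
  | .inl b => cond b y x
  | .inr r =>
    if x = y then (if ε then ![x + 2, x + 1, x + 1, x + 2] r else ![x + 1, x + 2, x + 2, x + 1] r)
    else ![-(x + y), y, -(x + y), x] r

theorem properCol_prism_iff :
    ∀ d, properCol prism 3 d ↔ ∃ ε, d = prismColoring (d (.inl false)) (d (.inl true)) ε := by
  decide +kernel

theorem prismColoring_of_ne :
    ∀ {x y : Fin 3}, x ≠ y → ∀ ε ε', prismColoring x y ε = prismColoring x y ε' := by
  decide

theorem prismColoring_self_inr_zero_eq_iff : ∀ {x : Fin 3} {ε ε'},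
    prismColoring x x ε (.inr 0) = prismColoring x x ε' (.inr 0) ↔ ε = ε' := by
  decide

theorem prism_triangle : ∀ i j : Fin 3, i ≠ j →
    prism.Adj (![.inl false, .inr 0, .inr 1] i) (![.inl false, .inr 0, .inr 1] j) := by
  decide

/-- Vertices of `G_k`: the hubs `inl b` shared by all copies, and `inr (i, r)`, the vertex of the
`i`-th prism labelled `inr r`. -/
abbrev Vk (k : ℕ) := Bool ⊕ Fin k × Fin 4

def glue (k : ℕ) (i : Fin k) : Bool ⊕ Fin 4 ↪ Vk k :=
  ⟨Sum.map id (Prod.mk i), Sum.map_injective.2 ⟨injective_id, Prod.mk_right_injective i⟩⟩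

def gluedPrisms (k : ℕ) : SimpleGraph (Vk k) := ⨆ i, prism.map (glue k i)

def gluedColoring {k : ℕ} (x y : Fin 3) (ε : Fin k → Bool) : Vk k → Fin 3
  | .inl b => cond b y x
  | .inr (i, r) => prismColoring x y (ε i) (.inr r)

section GluedPrisms

variable {k : ℕ}

theorem gluedPrisms_adj {a b : Bool ⊕ Fin 4} (h : prism.Adj a b) (i : Fin k) :
    (gluedPrisms k).Adj (glue k i a) (glue k i b) :=
  iSup_adj.2 ⟨i, map_adj_apply.2 h⟩

theorem properCol_gluedPrisms_iff {s : ℕ} {c : Vk k → Fin s} :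
    properCol (gluedPrisms k) s c ↔ ∀ i, properCol prism s (c ∘ glue k i) :=
  properCol_iSup_iff.trans (forall_congr' fun _ => properCol_map_iff _)

theorem gluedColoring_comp_glue (x y : Fin 3) (ε : Fin k → Bool) (i : Fin k) :
    gluedColoring x y ε ∘ glue k i = prismColoring x y (ε i) := by
  funext b
  rcases b with b | r <;> rfl

theorem properCol_gluedColoring (x y : Fin 3) (ε : Fin k → Bool) :
    properCol (gluedPrisms k) 3 (gluedColoring x y ε) :=
  properCol_gluedPrisms_iff.2 fun i => by
    rw [gluedColoring_comp_glue]
    exact (properCol_prism_iff _).2 ⟨ε i, rfl⟩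

theorem exists_eq_gluedColoring {c : Vk k → Fin 3} (hc : properCol (gluedPrisms k) 3 c) :
    ∃ ε, c = gluedColoring (c (.inl false)) (c (.inl true)) ε := by
  choose ε hε using fun i => (properCol_prism_iff _).1 (properCol_gluedPrisms_iff.1 hc i)
  refine ⟨ε, funext ?_⟩
  rintro ((_ | _) | ⟨i, r⟩)
  · rfl
  · rfl
  · exact congrFun (hε i) (.inr r)

theorem gluedColoring_of_ne {x y : Fin 3} (h : x ≠ y) (ε ε' : Fin k → Bool) :
    gluedColoring x y ε = gluedColoring x y ε' := by
  funext b
  rcases b with b | ⟨i, r⟩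
  · rfl
  · exact congrFun (prismColoring_of_ne h (ε i) (ε' i)) (.inr r)

end GluedPrisms

noncomputable def vkEquivFin (k : ℕ) : Vk k ≃ Fin (4 * k + 2) :=
  Fintype.equivFinOfCardEq (by simp; ring)

noncomputable def glued (k : ℕ) : SimpleGraph (Fin (4 * k + 2)) :=
  (gluedPrisms k).map (vkEquivFin k).toEmbedding

section Glued

variable {k : ℕ}

theorem properCol_glued_iff {s : ℕ} {c : Fin (4 * k + 2) → Fin s} :
    properCol (glued k) s c ↔ properCol (gluedPrisms k) s (c ∘ vkEquivFin k) :=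
  properCol_map_iff _

theorem properCol_glued_gluedColoring_comp (x y : Fin 3) (ε : Fin k → Bool) :
    properCol (glued k) 3 (gluedColoring x y ε ∘ (vkEquivFin k).symm) :=
  properCol_glued_iff.2 (by simpa [comp_assoc] using properCol_gluedColoring x y ε)

variable [NeZero k]

theorem chrom_glued : chrom (glued k) = 3 :=
  le_antisymm (chrom_le (properCol_glued_gluedColoring_comp 0 1 fun _ => false))
    (le_chrom_of_pairwise_adj (vkEquivFin k ∘ glue k 0 ∘ ![.inl false, .inr 0, .inr 1])
      fun i j hij => map_adj_apply.2 (gluedPrisms_adj (prism_triangle i j hij) 0))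

theorem isForcingSet_glued_hubs :
    IsForcingSet (glued k) {vkEquivFin k (.inl false), vkEquivFin k (.inl true)} := by
  unfold IsForcingSet
  rw [chrom_glued]
  set c₀ := gluedColoring 0 1 (fun _ => false) ∘ (vkEquivFin k).symm
  refine ⟨c₀, c₀, ⟨properCol_glued_gluedColoring_comp _ _ _, fun _ _ => rfl⟩, ?_⟩
  rintro c ⟨hc, hcD⟩
  obtain ⟨ε, hε⟩ := exists_eq_gluedColoring (properCol_glued_iff.1 hc)
  have hu : c (vkEquivFin k (.inl false)) = 0 := by
    simpa [c₀, gluedColoring] using hcD _ (Finset.mem_insert_self _ _)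
  have hv : c (vkEquivFin k (.inl true)) = 1 := by
    simpa [c₀, gluedColoring] using hcD _ (Finset.mem_insert_of_mem (Finset.mem_singleton_self _))
  rw [comp_apply, comp_apply, hu, hv, gluedColoring_of_ne (by decide) ε fun _ => false] at hε
  funext a
  simpa [c₀] using congrFun hε ((vkEquivFin k).symm a)

theorem Fchi_glued : Fchi (glued k) = 2 := by
  have hcard : Finset.card {vkEquivFin k (.inl false), vkEquivFin k (.inl true)} =
      chrom (glued k) - 1 := by
    rw [chrom_glued, Finset.card_pair ((vkEquivFin k).injective.ne (by simp))]
  simpa [chrom_glued] using Fchi_eq_of_isForcingSet isForcingSet_glued_hubs hcard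

end Glued

/-- Representatives of the partitions: `none` for hub colors `0 ≠ 1`, `some ε` for hub colors
`0 = 0`, with the first copy normalised to `ε 0 = false`. -/
def normalColoring (m : ℕ) : Option (Fin m → Bool) → Vk (m + 1) → Fin 3
  | none => gluedColoring 0 1 fun _ => false
  | some ε => gluedColoring 0 0 (Fin.cons false ε)

section Count

variable {m : ℕ}

theorem properCol_normalColoring (o : Option (Fin m → Bool)) :
    properCol (gluedPrisms (m + 1)) 3 (normalColoring m o) := by
  cases o <;> exact properCol_gluedColoring _ _ _

theorem sameColor_normalColoring_injective :
    Injective fun o => sameColor (normalColoring m o) := by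
  have hubs (ε) : sameColor (normalColoring m (some ε)) (.inl false) (.inl true) := rfl
  have hubs' : ¬sameColor (normalColoring m none) (.inl false) (.inl true) :=
    fun h => (by decide : (0 : Fin 3) ≠ 1) h
  rintro (_ | ε) (_ | ε') h <;> simp only at h
  · rfl
  · exact absurd (h ▸ hubs ε') hubs'
  · exact absurd (h ▸ hubs ε) hubs'
  · congr
    funext j
    have := congrFun₂ h (.inr (j.succ, 0)) (.inr (0, 0))
    simp only [sameColor, normalColoring, gluedColoring, Fin.cons_succ, Fin.cons_zero,
      prismColoring_self_inr_zero_eq_iff] at this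
    cases hj : ε j <;> cases hj' : ε' j <;> simp_all

theorem exists_sameColor_eq_normalColoring {c : Vk (m + 1) → Fin 3}
    (hc : properCol (gluedPrisms (m + 1)) 3 c) :
    ∃ o, sameColor c = sameColor (normalColoring m o) := by
  by_cases huv : c (.inl false) = c (.inl true)
  · have hB : c (.inl false) ≠ c (.inr (0, 0)) :=
      hc (gluedPrisms_adj (prism_triangle 0 1 (by decide)) 0)
    obtain ⟨π, hπu, hπB⟩ :=
      Equiv.Perm.exists_apply_eq_and_apply_eq hB (show (0 : Fin 3) ≠ 1 by decide)
    obtain ⟨η, hη⟩ := exists_eq_gluedColoring (hc.comp_injective π.injective)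
    simp only [comp_apply, ← huv, hπu] at hη
    have hη0 : η 0 = false := by
      have := congrFun hη (.inr (0, 0))
      rw [comp_apply, hπB] at this
      exact prismColoring_self_inr_zero_eq_iff (x := 0) |>.1
        (this.symm : prismColoring 0 0 (η 0) (.inr 0) = prismColoring 0 0 false (.inr 0))
    have hη' : η = Fin.cons false (Fin.tail η) := by
      rw [← hη0]
      exact (Fin.cons_self_tail η).symm
    refine ⟨some (Fin.tail η), ?_⟩
    rw [← sameColor_comp π.injective, hη, normalColoring, ← hη']
  · obtain ⟨π, hπu, hπv⟩ :=
      Equiv.Perm.exists_apply_eq_and_apply_eq huv (show (0 : Fin 3) ≠ 1 by decide)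
    obtain ⟨η, hη⟩ := exists_eq_gluedColoring (hc.comp_injective π.injective)
    refine ⟨none, ?_⟩
    rw [← sameColor_comp π.injective, hη, normalColoring]
    simp only [comp_apply, hπu, hπv]
    rw [gluedColoring_of_ne (by decide) η]

theorem Npart_gluedPrisms : Npart (gluedPrisms (m + 1)) 3 = 2 ^ m + 1 := by
  let toPartition (o : Option (Fin m → Bool)) :
      {r // ∃ c, properCol (gluedPrisms (m + 1)) 3 c ∧ r = sameColor c} :=
    ⟨_, _, properCol_normalColoring o, rfl⟩
  have hbij : Bijective toPartition := by
    refine ⟨fun o o' h => sameColor_normalColoring_injective (congrArg Subtype.val h), ?_⟩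
    rintro ⟨_, c, hc, rfl⟩
    obtain ⟨o, ho⟩ := exists_sameColor_eq_normalColoring hc
    exact ⟨o, Subtype.ext ho.symm⟩
  calc Npart (gluedPrisms (m + 1)) 3 = Nat.card (Option (Fin m → Bool)) :=
        (Nat.card_congr (Equiv.ofBijective _ hbij)).symm
    _ = 2 ^ m + 1 := by simp [Nat.card_eq_fintype_card]

end Count

theorem stmt12 (k : ℕ) (hk : 1 ≤ k) :
    ∃ G : SimpleGraph (Fin (4 * k + 2)),
      chrom G = 3 ∧ Fchi G = 2 ∧ Npart G 3 = 2 ^ (k - 1) + 1 := by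
  obtain ⟨m, rfl⟩ : ∃ m, k = m + 1 := ⟨k - 1, by omega⟩
  refine ⟨glued (m + 1), chrom_glued, Fchi_glued, ?_⟩
  rw [glued, Npart_map_equiv, Npart_gluedPrisms, Nat.add_sub_cancel]
end
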